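/- arXiv:math/0610934 — 10 statements merged into one kernel-verified Lean document; each statement's English description precedes it below -/
import Mathlib

section
/- Under the listed assumptions, Mac Lane's pentagonal equation holds: for all objects A, B, C, D of 𝒜, b→_{A∧B,C,D} ∘ b→_{A,B,C∧D} = (b→_{A,B,C} ∧ 1_D) ∘ b→_{A,B∧C,D} ∘ (1_A ∧ b→_{B,C,D}). -/
open CategoryTheory

universe v u

/-- The data and assumptions of Section 2 of "Medial Commutativity":
a category `C` with a bifunctor `wedge`, a special object `top`,
medial commutativity arrows `cm` (natural in all four indices),
natural isomorphisms `δ` and `σ` with the unit object, and the equations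
(ψc^m), (ψδ), (ψσ), (c^mc^m) and (VII). -/
structure MedialData (C : Type u) [Category.{v} C] where
  /-- the bifunctor `∧` on objects -/
  wedge : C → C → C
  /-- the bifunctor `∧` on arrows -/
  whom : ∀ {A B X Y : C}, (A ⟶ B) → (X ⟶ Y) → (wedge A X ⟶ wedge B Y)
  /-- (bif 1) -/
  whom_id : ∀ (A B : C), whom (𝟙 A) (𝟙 B) = 𝟙 (wedge A B)
  /-- (bif 2) -/
  whom_comp : ∀ {A B B' X Y Y' : C} (f : A ⟶ B) (g : B ⟶ B') (h : X ⟶ Y) (k : Y ⟶ Y'),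
      whom (f ≫ g) (h ≫ k) = whom f h ≫ whom g k
  /-- the special object `⊤` -/
  top : C
  /-- medial commutativity `c^m_{A,B,X,Y} : (A∧B)∧(X∧Y) ⟶ (A∧X)∧(B∧Y)` -/
  cm : ∀ (A B X Y : C), wedge (wedge A B) (wedge X Y) ⟶ wedge (wedge A X) (wedge B Y)
  /-- (c^m nat) -/
  cm_natural : ∀ {A A' B B' X X' Y Y' : C}
      (f : A ⟶ A') (g : B ⟶ B') (h : X ⟶ X') (j : Y ⟶ Y'),
      cm A B X Y ≫ whom (whom f h) (whom g j) = whom (whom f g) (whom h j) ≫ cm A' B' X' Y'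
  /-- `δ→_A : A∧⊤ ⟶ A` -/
  δto : ∀ (A : C), wedge A top ⟶ A
  /-- `δ←_A : A ⟶ A∧⊤` -/
  δfrom : ∀ (A : C), A ⟶ wedge A top
  /-- naturality of `δ→` -/
  δto_natural : ∀ {A B : C} (f : A ⟶ B), whom f (𝟙 top) ≫ δto B = δto A ≫ f
  δto_δfrom : ∀ (A : C), δto A ≫ δfrom A = 𝟙 (wedge A top)
  δfrom_δto : ∀ (A : C), δfrom A ≫ δto A = 𝟙 A
  /-- `σ→_A : ⊤∧A ⟶ A` -/
  σto : ∀ (A : C), wedge top A ⟶ A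
  /-- `σ←_A : A ⟶ ⊤∧A` -/
  σfrom : ∀ (A : C), A ⟶ wedge top A
  /-- naturality of `σ→` -/
  σto_natural : ∀ {A B : C} (f : A ⟶ B), whom (𝟙 top) f ≫ σto B = σto A ≫ f
  σto_σfrom : ∀ (A : C), σto A ≫ σfrom A = 𝟙 (wedge top A)
  σfrom_σto : ∀ (A : C), σfrom A ≫ σto A = 𝟙 A
  /-- (ψc^m) -/
  psi_cm : ∀ (A₁ A₁' A₂ A₂' A₃ A₃' A₄ A₄' : C),
      cm (wedge A₁ A₁') (wedge A₂ A₂') (wedge A₃ A₃') (wedge A₄ A₄') ≫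
        whom (cm A₁ A₁' A₃ A₃') (cm A₂ A₂' A₄ A₄') ≫
        cm (wedge A₁ A₃) (wedge A₁' A₃') (wedge A₂ A₄) (wedge A₂' A₄')
      =
      whom (cm A₁ A₁' A₂ A₂') (cm A₃ A₃' A₄ A₄') ≫
        cm (wedge A₁ A₂) (wedge A₁' A₂') (wedge A₃ A₄) (wedge A₃' A₄') ≫
        whom (cm A₁ A₂ A₃ A₄) (cm A₁' A₂' A₃' A₄')
  /-- (ψδ) -/
  psi_δ : ∀ (A A' : C),
      δto (wedge A A') =
        whom (𝟙 (wedge A A')) (δfrom top) ≫ cm A A' top top ≫ whom (δto A) (δto A')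
  /-- (ψσ) -/
  psi_σ : ∀ (A A' : C),
      σto (wedge A A') =
        whom (δfrom top) (𝟙 (wedge A A')) ≫ cm top top A A' ≫ whom (σto A) (σto A')
  /-- (c^mc^m) -/
  cm_cm : ∀ (A B X Y : C), cm A B X Y ≫ cm A X B Y = 𝟙 (wedge (wedge A B) (wedge X Y))
  /-- (VII) -/
  δtop_eq_σtop : δto top = σto top

variable {C : Type u} [Category.{v} C]

/-- the associativity arrow `b→_{A,B,X} : A∧(B∧X) ⟶ (A∧B)∧X`. -/
def MedialData.bto (M : MedialData C) (A B X : C) :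
    M.wedge A (M.wedge B X) ⟶ M.wedge (M.wedge A B) X :=
  M.whom (M.δfrom A) (𝟙 (M.wedge B X)) ≫ M.cm A M.top B X ≫
    M.whom (𝟙 (M.wedge A B)) (M.σto X)

/-- the associativity arrow `b←_{A,B,X} : (A∧B)∧X ⟶ A∧(B∧X)`. -/
def MedialData.bfrom (M : MedialData C) (A B X : C) :
    M.wedge (M.wedge A B) X ⟶ M.wedge A (M.wedge B X) :=
  M.whom (𝟙 (M.wedge A B)) (M.σfrom X) ≫ M.cm A B M.top X ≫
    M.whom (M.δto A) (𝟙 (M.wedge B X))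

/-- the commutativity arrow `c_{A,B} : A∧B ⟶ B∧A`. -/
def MedialData.cc (M : MedialData C) (A B : C) : M.wedge A B ⟶ M.wedge B A :=
  M.whom (M.σfrom A) (M.δfrom B) ≫ M.cm M.top A B M.top ≫ M.whom (M.σto B) (M.δto A)

namespace MedialData

variable (M : MedialData C)

lemma ww {A B B' X Y Y' : C} (f : A ⟶ B) (g : B ⟶ B') (h : X ⟶ Y) (k : Y ⟶ Y') :
    M.whom f h ≫ M.whom g k = M.whom (f ≫ g) (h ≫ k) := (M.whom_comp f g h k).symm

lemma ww_assoc {A B B' X Y Y' : C} {Z : C} (f : A ⟶ B) (g : B ⟶ B') (h : X ⟶ Y)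
    (k : Y ⟶ Y') (z : M.wedge B' Y' ⟶ Z) :
    M.whom f h ≫ (M.whom g k ≫ z) = M.whom (f ≫ g) (h ≫ k) ≫ z := by
  rw [← Category.assoc, M.ww]

lemma cm_cm_assoc (A B X Y : C) {Z : C} (z : M.wedge (M.wedge A B) (M.wedge X Y) ⟶ Z) :
    M.cm A B X Y ≫ (M.cm A X B Y ≫ z) = z := by
  rw [← Category.assoc, M.cm_cm, Category.id_comp]

lemma δfrom_natural {A B : C} (f : A ⟶ B) :
    f ≫ M.δfrom B = M.δfrom A ≫ M.whom f (𝟙 M.top) := by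
  calc f ≫ M.δfrom B = (M.δfrom A ≫ M.δto A) ≫ f ≫ M.δfrom B := by
        rw [M.δfrom_δto, Category.id_comp]
    _ = M.δfrom A ≫ (M.δto A ≫ f) ≫ M.δfrom B := by simp only [Category.assoc]
    _ = M.δfrom A ≫ (M.whom f (𝟙 M.top) ≫ M.δto B) ≫ M.δfrom B := by rw [M.δto_natural]
    _ = M.δfrom A ≫ M.whom f (𝟙 M.top) := by rw [Category.assoc, M.δto_δfrom, Category.comp_id]

lemma psi_δ_inv (A A' : C) :
    M.δfrom (M.wedge A A') =
      M.whom (M.δfrom A) (M.δfrom A') ≫ M.cm A M.top A' M.top ≫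
        M.whom (𝟙 (M.wedge A A')) (M.δto M.top) := by
  have h : (M.whom (M.δfrom A) (M.δfrom A') ≫ M.cm A M.top A' M.top ≫
      M.whom (𝟙 (M.wedge A A')) (M.δto M.top)) ≫ M.δto (M.wedge A A') = 𝟙 _ := by
    rw [M.psi_δ A A']
    simp only [Category.assoc, M.ww_assoc, M.ww, M.δto_δfrom, M.δfrom_δto,
      Category.id_comp, Category.comp_id, M.whom_id, M.cm_cm_assoc]
  have h2 := congrArg (fun t => t ≫ M.δfrom (M.wedge A A')) h
  simp only [Category.assoc, M.δto_δfrom, Category.comp_id, Category.id_comp] at h2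
  exact h2.symm

lemma absorb_left (A : C) :
    M.δfrom A ≫ M.whom (M.δfrom A) (M.δfrom M.top) ≫ M.cm A M.top M.top M.top =
      M.δfrom A ≫ M.whom (M.δfrom A) (M.δfrom M.top) := by
  calc M.δfrom A ≫ M.whom (M.δfrom A) (M.δfrom M.top) ≫ M.cm A M.top M.top M.top
      = M.δfrom A ≫ (M.whom (M.δfrom A) (M.δfrom M.top) ≫ M.cm A M.top M.top M.top ≫
          M.whom (𝟙 (M.wedge A M.top)) (M.δto M.top)) ≫
          M.whom (𝟙 (M.wedge A M.top)) (M.δfrom M.top) := by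
        simp only [Category.assoc, M.ww_assoc, M.ww, M.δto_δfrom, Category.id_comp,
          Category.comp_id, M.whom_id]
    _ = M.δfrom A ≫ M.δfrom (M.wedge A M.top) ≫
          M.whom (𝟙 (M.wedge A M.top)) (M.δfrom M.top) := by rw [← M.psi_δ_inv]
    _ = M.δfrom A ≫ M.whom (M.δfrom A) (𝟙 M.top) ≫
          M.whom (𝟙 (M.wedge A M.top)) (M.δfrom M.top) := by
        rw [reassoc_of% (M.δfrom_natural (M.δfrom A))]
    _ = M.δfrom A ≫ M.whom (M.δfrom A) (M.δfrom M.top) := by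
        simp only [M.ww, Category.id_comp, Category.comp_id]

lemma absorb_right (Y : C) :
    M.cm M.top M.top M.top Y ≫ M.whom (M.δto M.top) (M.σto Y) ≫ M.σto Y =
      M.whom (M.δto M.top) (M.σto Y) ≫ M.σto Y := by
  have hσ : M.σto (M.wedge M.top Y) =
      M.whom (M.δfrom M.top) (𝟙 (M.wedge M.top Y)) ≫ M.cm M.top M.top M.top Y ≫
        M.whom (M.δto M.top) (M.σto Y) := by
    rw [M.δtop_eq_σtop]; exact M.psi_σ M.top Y
  calc M.cm M.top M.top M.top Y ≫ M.whom (M.δto M.top) (M.σto Y) ≫ M.σto Y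
      = M.whom (M.δto M.top) (𝟙 (M.wedge M.top Y)) ≫
          (M.whom (M.δfrom M.top) (𝟙 (M.wedge M.top Y)) ≫ M.cm M.top M.top M.top Y ≫
            M.whom (M.δto M.top) (M.σto Y)) ≫ M.σto Y := by
        simp only [Category.assoc, M.ww_assoc, M.δto_δfrom, Category.id_comp,
          Category.comp_id, M.whom_id]
    _ = M.whom (M.δto M.top) (𝟙 (M.wedge M.top Y)) ≫ M.σto (M.wedge M.top Y) ≫ M.σto Y := by
        rw [← hσ]
    _ = M.whom (M.δto M.top) (𝟙 (M.wedge M.top Y)) ≫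
          M.whom (𝟙 M.top) (M.σto Y) ≫ M.σto Y := by
        rw [← M.σto_natural (M.σto Y)]
    _ = M.whom (M.δto M.top) (M.σto Y) ≫ M.σto Y := by
        rw [M.ww_assoc, Category.id_comp, Category.comp_id]

end MedialData

/-- Mac Lane's pentagonal equation (b5) holds. -/
theorem pentagon_of_medial (M : MedialData C) (A B X Y : C) :
    M.bto A B (M.wedge X Y) ≫ M.bto (M.wedge A B) X Y =
      M.whom (𝟙 A) (M.bto B X Y) ≫ M.bto A (M.wedge B X) Y ≫
        M.whom (M.bto A B X) (𝟙 Y) := by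
  have hR : M.whom (𝟙 A) (M.bto B X Y) ≫ M.bto A (M.wedge B X) Y ≫
        M.whom (M.bto A B X) (𝟙 Y) =
      M.whom (M.δfrom A) (M.whom (M.δfrom B) (𝟙 (M.wedge X Y)) ≫ M.cm B M.top X Y) ≫
        M.cm A M.top (M.wedge B X) (M.wedge M.top Y) ≫
        M.whom (M.bto A B X) (M.whom (𝟙 M.top) (M.σto Y) ≫ M.σto Y) := by
    calc M.whom (𝟙 A) (M.bto B X Y) ≫ M.bto A (M.wedge B X) Y ≫
          M.whom (M.bto A B X) (𝟙 Y)
        = M.whom (M.δfrom A) (M.whom (M.δfrom B) (𝟙 (M.wedge X Y)) ≫ M.cm B M.top X Y) ≫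
            M.whom (M.whom (𝟙 A) (𝟙 M.top)) (M.whom (𝟙 (M.wedge B X)) (M.σto Y)) ≫
            M.cm A M.top (M.wedge B X) Y ≫
            M.whom (𝟙 (M.wedge A (M.wedge B X))) (M.σto Y) ≫
            M.whom (M.bto A B X) (𝟙 Y) := by
          simp only [MedialData.bto, M.ww, M.ww_assoc, M.whom_id,
            Category.id_comp, Category.comp_id, Category.assoc]
      _ = M.whom (M.δfrom A) (M.whom (M.δfrom B) (𝟙 (M.wedge X Y)) ≫ M.cm B M.top X Y) ≫
            M.cm A M.top (M.wedge B X) (M.wedge M.top Y) ≫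
            M.whom (M.whom (𝟙 A) (𝟙 (M.wedge B X))) (M.whom (𝟙 M.top) (M.σto Y)) ≫
            M.whom (𝟙 (M.wedge A (M.wedge B X))) (M.σto Y) ≫
            M.whom (M.bto A B X) (𝟙 Y) := by
          rw [← reassoc_of% (M.cm_natural (𝟙 A) (𝟙 M.top) (𝟙 (M.wedge B X)) (M.σto Y))]
      _ = M.whom (M.δfrom A) (M.whom (M.δfrom B) (𝟙 (M.wedge X Y)) ≫ M.cm B M.top X Y) ≫
            M.cm A M.top (M.wedge B X) (M.wedge M.top Y) ≫
            M.whom (M.bto A B X) (M.whom (𝟙 M.top) (M.σto Y) ≫ M.σto Y) := by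
          simp only [MedialData.bto, M.ww, M.ww_assoc, M.whom_id,
            Category.id_comp, Category.comp_id, Category.assoc]
  have hL : M.bto A B (M.wedge X Y) ≫ M.bto (M.wedge A B) X Y =
      M.whom (M.δfrom A) (M.whom (M.δfrom B) (𝟙 (M.wedge X Y)) ≫ M.cm B M.top X Y) ≫
        M.cm A M.top (M.wedge B X) (M.wedge M.top Y) ≫
        M.whom (M.bto A B X) (M.whom (𝟙 M.top) (M.σto Y) ≫ M.σto Y) := by
    calc M.bto A B (M.wedge X Y) ≫ M.bto (M.wedge A B) X Y
        = M.whom (M.δfrom A) (𝟙 (M.wedge B (M.wedge X Y))) ≫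
            M.cm A M.top B (M.wedge X Y) ≫
            M.whom (M.δfrom (M.wedge A B)) (M.σto (M.wedge X Y)) ≫
            M.cm (M.wedge A B) M.top X Y ≫
            M.whom (𝟙 (M.wedge (M.wedge A B) X)) (M.σto Y) := by
          simp only [MedialData.bto, M.ww, M.ww_assoc, M.whom_id,
            Category.id_comp, Category.comp_id, Category.assoc]
      _ = M.whom (M.δfrom A) (𝟙 (M.wedge B (M.wedge X Y))) ≫
            M.cm A M.top B (M.wedge X Y) ≫
            M.whom (M.whom (M.δfrom A) (M.δfrom B))
              (M.whom (M.δfrom M.top) (𝟙 (M.wedge X Y))) ≫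
            M.whom (M.cm A M.top B M.top) (M.cm M.top M.top X Y) ≫
            M.whom (M.whom (𝟙 (M.wedge A B)) (M.δto M.top))
              (M.whom (M.σto X) (M.σto Y)) ≫
            M.cm (M.wedge A B) M.top X Y ≫
            M.whom (𝟙 (M.wedge (M.wedge A B) X)) (M.σto Y) := by
          rw [M.psi_δ_inv A B, M.psi_σ X Y]
          simp only [M.ww, M.ww_assoc, M.whom_id,
            Category.id_comp, Category.comp_id, Category.assoc]
      _ = M.whom (M.δfrom A) (𝟙 (M.wedge B (M.wedge X Y))) ≫
            M.whom (M.whom (M.δfrom A) (M.δfrom M.top))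
              (M.whom (M.δfrom B) (𝟙 (M.wedge X Y))) ≫
            M.cm (M.wedge A M.top) (M.wedge M.top M.top) (M.wedge B M.top) (M.wedge X Y) ≫
            M.whom (M.cm A M.top B M.top) (M.cm M.top M.top X Y) ≫
            M.cm (M.wedge A B) (M.wedge M.top M.top) (M.wedge M.top X) (M.wedge M.top Y) ≫
            M.whom (M.whom (𝟙 (M.wedge A B)) (M.σto X))
              (M.whom (M.δto M.top) (M.σto Y)) ≫
            M.whom (𝟙 (M.wedge (M.wedge A B) X)) (M.σto Y) := by
          rw [reassoc_of% (M.cm_natural (M.δfrom A) (M.δfrom M.top) (M.δfrom B)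
              (𝟙 (M.wedge X Y))),
            ← reassoc_of% (M.cm_natural (𝟙 (M.wedge A B)) (M.δto M.top)
              (M.σto X) (M.σto Y))]
      _ = M.whom (M.δfrom A) (𝟙 (M.wedge B (M.wedge X Y))) ≫
            M.whom (M.whom (M.δfrom A) (M.δfrom M.top))
              (M.whom (M.δfrom B) (𝟙 (M.wedge X Y))) ≫
            M.whom (M.cm A M.top M.top M.top) (M.cm B M.top X Y) ≫
            M.cm (M.wedge A M.top) (M.wedge M.top M.top) (M.wedge B X) (M.wedge M.top Y) ≫
            M.whom (M.cm A M.top B X) (M.cm M.top M.top M.top Y) ≫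
            M.whom (M.whom (𝟙 (M.wedge A B)) (M.σto X))
              (M.whom (M.δto M.top) (M.σto Y)) ≫
            M.whom (𝟙 (M.wedge (M.wedge A B) X)) (M.σto Y) := by
          rw [reassoc_of% (M.psi_cm A M.top M.top M.top B M.top X Y)]
      _ = M.whom (M.δfrom A ≫ M.whom (M.δfrom A) (M.δfrom M.top) ≫ M.cm A M.top M.top M.top)
            (M.whom (M.δfrom B) (𝟙 (M.wedge X Y)) ≫ M.cm B M.top X Y) ≫
            M.cm (M.wedge A M.top) (M.wedge M.top M.top) (M.wedge B X) (M.wedge M.top Y) ≫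
            M.whom (M.cm A M.top B X ≫ M.whom (𝟙 (M.wedge A B)) (M.σto X))
              (M.cm M.top M.top M.top Y ≫ M.whom (M.δto M.top) (M.σto Y) ≫ M.σto Y) := by
          simp only [M.ww, M.ww_assoc, M.whom_id,
            Category.id_comp, Category.comp_id, Category.assoc]
      _ = M.whom (M.δfrom A ≫ M.whom (M.δfrom A) (M.δfrom M.top))
            (M.whom (M.δfrom B) (𝟙 (M.wedge X Y)) ≫ M.cm B M.top X Y) ≫
            M.cm (M.wedge A M.top) (M.wedge M.top M.top) (M.wedge B X) (M.wedge M.top Y) ≫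
            M.whom (M.cm A M.top B X ≫ M.whom (𝟙 (M.wedge A B)) (M.σto X))
              (M.whom (M.δto M.top) (M.σto Y) ≫ M.σto Y) := by
          rw [M.absorb_left A, M.absorb_right Y]
      _ = M.whom (M.δfrom A) (M.whom (M.δfrom B) (𝟙 (M.wedge X Y)) ≫ M.cm B M.top X Y) ≫
            M.whom (M.whom (M.δfrom A) (M.δfrom M.top))
              (M.whom (𝟙 (M.wedge B X)) (𝟙 (M.wedge M.top Y))) ≫
            M.cm (M.wedge A M.top) (M.wedge M.top M.top) (M.wedge B X) (M.wedge M.top Y) ≫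
            M.whom (M.cm A M.top B X ≫ M.whom (𝟙 (M.wedge A B)) (M.σto X))
              (M.whom (M.δto M.top) (M.σto Y) ≫ M.σto Y) := by
          simp only [M.ww, M.ww_assoc, M.whom_id,
            Category.id_comp, Category.comp_id, Category.assoc]
      _ = M.whom (M.δfrom A) (M.whom (M.δfrom B) (𝟙 (M.wedge X Y)) ≫ M.cm B M.top X Y) ≫
            M.cm A M.top (M.wedge B X) (M.wedge M.top Y) ≫
            M.whom (M.whom (M.δfrom A) (𝟙 (M.wedge B X)))
              (M.whom (M.δfrom M.top) (𝟙 (M.wedge M.top Y))) ≫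
            M.whom (M.cm A M.top B X ≫ M.whom (𝟙 (M.wedge A B)) (M.σto X))
              (M.whom (M.δto M.top) (M.σto Y) ≫ M.σto Y) := by
          rw [← reassoc_of% (M.cm_natural (M.δfrom A) (M.δfrom M.top)
              (𝟙 (M.wedge B X)) (𝟙 (M.wedge M.top Y)))]
      _ = M.whom (M.δfrom A) (M.whom (M.δfrom B) (𝟙 (M.wedge X Y)) ≫ M.cm B M.top X Y) ≫
            M.cm A M.top (M.wedge B X) (M.wedge M.top Y) ≫
            M.whom (M.bto A B X) (M.whom (𝟙 M.top) (M.σto Y) ≫ M.σto Y) := by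
          simp only [MedialData.bto, M.ww, M.ww_assoc, M.whom_id, M.δfrom_δto,
            Category.id_comp, Category.comp_id, Category.assoc]
  rw [hL, hR]
end

section
/- Under the listed assumptions, the equation (c^m34) holds: for all objects A₁, A₂ of 𝒜, c^m_{A₁,A₂,⊤,⊤} = (δ←_{A₁} ∧ δ←_{A₂}) ∘ δ→_{A₁∧A₂} ∘ (1_{A₁∧A₂} ∧ δ→_⊤). -/
open CategoryTheory

universe v u

variable {C : Type u} [Category.{v} C]

/-- The equation (c^m34). -/
theorem cm34 (M : MedialData C) (A₁ A₂ : C) :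
    M.cm A₁ A₂ M.top M.top =
      M.whom (𝟙 (M.wedge A₁ A₂)) (M.δto M.top) ≫ M.δto (M.wedge A₁ A₂) ≫
        M.whom (M.δfrom A₁) (M.δfrom A₂) := by
  rw [M.psi_δ]
  simp only [Category.assoc]
  rw [← Category.assoc, ← M.whom_comp, Category.id_comp, M.δto_δfrom, M.whom_id,
      Category.id_comp, ← M.whom_comp, M.δto_δfrom, M.δto_δfrom, M.whom_id, Category.comp_id]
end

section
/- Under the listed assumptions, the equation (c^m234) holds: for every object A of 𝒜, c^m_{A,⊤,⊤,⊤} = 1_{(A∧⊤)∧(⊤∧⊤)}. -/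
open CategoryTheory

universe v u

variable {C : Type u} [Category.{v} C]

/-- The equation (c^m234). -/
theorem cm234 (M : MedialData C) (A : C) :
    M.cm A M.top M.top M.top =
      𝟙 (M.wedge (M.wedge A M.top) (M.wedge M.top M.top)) := by
  -- Step 1: δto (A∧⊤) = whom (δto A) (𝟙 ⊤)
  have h1 : M.δto (M.wedge A M.top) = M.whom (M.δto A) (𝟙 M.top) := by
    have h := M.δto_natural (M.δto A)
    have h' := congrArg (· ≫ M.δfrom A) h
    simpa [Category.assoc, M.δto_δfrom] using h'.symm
  have h2 := M.psi_δ A M.top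
  rw [h1] at h2
  have h3 := congrArg (fun g => M.whom (𝟙 (M.wedge A M.top)) (M.δto M.top) ≫ g ≫
      M.whom (M.δfrom A) (M.δfrom M.top)) h2
  simp only [Category.assoc] at h3
  have e1 : M.whom (𝟙 (M.wedge A M.top)) (M.δto M.top) ≫
      M.whom (𝟙 (M.wedge A M.top)) (M.δfrom M.top) = 𝟙 _ := by
    rw [← M.whom_comp, M.δto_δfrom, Category.id_comp, M.whom_id]
  have e2 : M.whom (M.δto A) (M.δto M.top) ≫
      M.whom (M.δfrom A) (M.δfrom M.top) = 𝟙 _ := by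
    rw [← M.whom_comp, M.δto_δfrom, M.δto_δfrom, M.whom_id]
  have e3 : M.whom (𝟙 (M.wedge A M.top)) (M.δto M.top) ≫
      M.whom (M.δto A) (𝟙 M.top) ≫ M.whom (M.δfrom A) (M.δfrom M.top) = 𝟙 _ := by
    rw [← M.whom_comp, ← M.whom_comp]
    simp [M.δfrom_δto, M.δto_δfrom, M.whom_id]
  calc M.cm A M.top M.top M.top
      = M.cm A M.top M.top M.top ≫
        (M.whom (M.δto A) (M.δto M.top) ≫ M.whom (M.δfrom A) (M.δfrom M.top)) := by
        rw [e2, Category.comp_id]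
    _ = (M.whom (𝟙 (M.wedge A M.top)) (M.δto M.top) ≫
          M.whom (𝟙 (M.wedge A M.top)) (M.δfrom M.top)) ≫
        M.cm A M.top M.top M.top ≫
        (M.whom (M.δto A) (M.δto M.top) ≫ M.whom (M.δfrom A) (M.δfrom M.top)) := by
        rw [e1, Category.id_comp]
    _ = M.whom (𝟙 (M.wedge A M.top)) (M.δto M.top) ≫
        M.whom (M.δto A) (𝟙 M.top) ≫ M.whom (M.δfrom A) (M.δfrom M.top) := by
        simp only [Category.assoc]; rw [h3]
    _ = 𝟙 _ := e3
end

section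
/- Under the listed assumptions, the equation (c^m24) holds: for all objects A₁, A₃ of 𝒜, c^m_{A₁,⊤,A₃,⊤} = (1_{A₁∧A₃} ∧ δ←_⊤) ∘ δ←_{A₁∧A₃} ∘ (δ→_{A₁} ∧ δ→_{A₃}). -/
open CategoryTheory

universe v u

variable {C : Type u} [Category.{v} C]

/-- The equation (c^m24). -/
theorem cm24 (M : MedialData C) (A₁ A₃ : C) :
    M.cm A₁ M.top A₃ M.top =
      M.whom (M.δto A₁) (M.δto A₃) ≫ M.δfrom (M.wedge A₁ A₃) ≫
        M.whom (𝟙 (M.wedge A₁ A₃)) (M.δfrom M.top) := by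
  set X := M.whom (M.δfrom A₁) (M.δfrom A₃) ≫ M.cm A₁ M.top A₃ M.top ≫
      M.whom (𝟙 (M.wedge A₁ A₃)) (M.δto M.top) with hXdef
  have h1 : M.δto (M.wedge A₁ A₃) ≫ X = 𝟙 _ := by
    rw [hXdef, M.psi_δ]
    slice_lhs 3 4 => rw [← M.whom_comp, M.δto_δfrom, M.δto_δfrom, M.whom_id]
    rw [Category.id_comp]
    slice_lhs 2 3 => rw [M.cm_cm]
    rw [Category.id_comp, ← M.whom_comp, M.δfrom_δto, Category.id_comp, M.whom_id]
  have hX : M.δfrom (M.wedge A₁ A₃) = X := by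
    have : M.δfrom (M.wedge A₁ A₃) ≫ M.δto (M.wedge A₁ A₃) ≫ X
        = M.δfrom (M.wedge A₁ A₃) := by rw [h1, Category.comp_id]
    rw [← this, ← Category.assoc, M.δfrom_δto, Category.id_comp]
  rw [hX, hXdef]
  slice_rhs 1 2 => rw [← M.whom_comp, M.δto_δfrom, M.δto_δfrom, M.whom_id]
  rw [Category.id_comp, Category.assoc, ← M.whom_comp, M.δto_δfrom,
    Category.id_comp, M.whom_id, Category.comp_id]
end

section
/- Under the listed assumptions, the equation (c^m12) holds: for all objects A₃, A₄ of 𝒜, c^m_{⊤,⊤,A₃,A₄} = (σ←_{A₃} ∧ σ←_{A₄}) ∘ σ→_{A₃∧A₄} ∘ (σ→_⊤ ∧ 1_{A₃∧A₄}). -/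
open CategoryTheory

universe v u

variable {C : Type u} [Category.{v} C]

/-- The equation (c^m12). -/
theorem cm12 (M : MedialData C) (A₃ A₄ : C) :
    M.cm M.top M.top A₃ A₄ =
      M.whom (M.σto M.top) (𝟙 (M.wedge A₃ A₄)) ≫ M.σto (M.wedge A₃ A₄) ≫
        M.whom (M.σfrom A₃) (M.σfrom A₄) := by
  simp only [M.psi_σ, Category.assoc, ← M.whom_comp, M.σto_σfrom,
    ← M.δtop_eq_σtop, M.δto_δfrom, Category.comp_id, Category.id_comp,
    M.whom_id]
  rw [← Category.assoc, ← M.whom_comp, M.δto_δfrom, Category.comp_id, M.whom_id,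
    Category.id_comp]
end

section
/- Under the listed assumptions, the equation (c^m123) holds: for every object A of 𝒜, c^m_{⊤,⊤,⊤,A} = 1_{(⊤∧⊤)∧(⊤∧A)}. -/
open CategoryTheory

universe v u

variable {C : Type u} [Category.{v} C]

/-- The equation (c^m123). -/
theorem cm123 (M : MedialData C) (A : C) :
    M.cm M.top M.top M.top A =
      𝟙 (M.wedge (M.wedge M.top M.top) (M.wedge M.top A)) := by
  -- Step 1: σ→_{⊤∧A} = 1_⊤ ∧ σ→_A, from naturality of σ→ at σ→_A.
  have hσ : M.σto (M.wedge M.top A) = M.whom (𝟙 M.top) (M.σto A) := by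
    have h := M.σto_natural (M.σto A)
    calc M.σto (M.wedge M.top A)
        = M.σto (M.wedge M.top A) ≫ M.σto A ≫ M.σfrom A := by
          rw [M.σto_σfrom, Category.comp_id]
      _ = (M.σto (M.wedge M.top A) ≫ M.σto A) ≫ M.σfrom A := by
          rw [Category.assoc]
      _ = (M.whom (𝟙 M.top) (M.σto A) ≫ M.σto A) ≫ M.σfrom A := by rw [h]
      _ = M.whom (𝟙 M.top) (M.σto A) := by
          rw [Category.assoc, M.σto_σfrom, Category.comp_id]
  -- Step 2: key absorption equation.
  have key : M.cm M.top M.top M.top A ≫ M.whom (M.δto M.top) (M.σto A)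
      = M.whom (M.δto M.top) (M.σto A) := by
    have hψ := M.psi_σ M.top A
    rw [hσ] at hψ
    -- hψ : whom 1 (σto A) = whom (δfrom ⊤) 1 ≫ cm ≫ whom (σto ⊤) (σto A)
    have h2 := congrArg (fun z => M.whom (M.δto M.top) (𝟙 (M.wedge M.top A)) ≫ z) hψ
    calc M.cm M.top M.top M.top A ≫ M.whom (M.δto M.top) (M.σto A)
        = M.cm M.top M.top M.top A ≫ M.whom (M.σto M.top) (M.σto A) := by
          rw [M.δtop_eq_σtop]
      _ = (𝟙 _ ≫ M.cm M.top M.top M.top A) ≫ M.whom (M.σto M.top) (M.σto A) := by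
          rw [Category.id_comp]
      _ = ((M.whom (M.δto M.top) (𝟙 (M.wedge M.top A)) ≫
            M.whom (M.δfrom M.top) (𝟙 (M.wedge M.top A))) ≫
            M.cm M.top M.top M.top A) ≫ M.whom (M.σto M.top) (M.σto A) := by
          rw [← M.whom_comp, M.δto_δfrom, Category.comp_id, M.whom_id]
      _ = M.whom (M.δto M.top) (𝟙 (M.wedge M.top A)) ≫
            (M.whom (M.δfrom M.top) (𝟙 (M.wedge M.top A)) ≫
             M.cm M.top M.top M.top A ≫ M.whom (M.σto M.top) (M.σto A)) := by
          simp only [Category.assoc]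
      _ = M.whom (M.δto M.top) (𝟙 (M.wedge M.top A)) ≫ M.whom (𝟙 M.top) (M.σto A) := by
          rw [← hψ]
      _ = M.whom (M.δto M.top) (M.σto A) := by
          rw [← M.whom_comp, Category.comp_id, Category.id_comp]
  -- Step 3: cancel the iso whom (δto ⊤) (σto A).
  have hiso : M.whom (M.δto M.top) (M.σto A) ≫ M.whom (M.δfrom M.top) (M.σfrom A)
      = 𝟙 _ := by
    rw [← M.whom_comp, M.δto_δfrom, M.σto_σfrom, M.whom_id]
  calc M.cm M.top M.top M.top A
      = M.cm M.top M.top M.top A ≫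
          M.whom (M.δto M.top) (M.σto A) ≫ M.whom (M.δfrom M.top) (M.σfrom A) := by
        rw [hiso, Category.comp_id]
    _ = (M.cm M.top M.top M.top A ≫ M.whom (M.δto M.top) (M.σto A)) ≫
          M.whom (M.δfrom M.top) (M.σfrom A) := by rw [Category.assoc]
    _ = M.whom (M.δto M.top) (M.σto A) ≫ M.whom (M.δfrom M.top) (M.σfrom A) := by
        rw [key]
    _ = 𝟙 _ := hiso
end

section
/- Under the listed assumptions, the equation (c^m13) holds: for all objects A₂, A₄ of 𝒜, c^m_{⊤,A₂,⊤,A₄} = (σ←_⊤ ∧ 1_{A₂∧A₄}) ∘ σ←_{A₂∧A₄} ∘ (σ→_{A₂} ∧ σ→_{A₄}). -/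
open CategoryTheory

universe v u

variable {C : Type u} [Category.{v} C]

/-- The equation (c^m13). -/
theorem cm13 (M : MedialData C) (A₂ A₄ : C) :
    M.cm M.top A₂ M.top A₄ =
      M.whom (M.σto A₂) (M.σto A₄) ≫ M.σfrom (M.wedge A₂ A₄) ≫
        M.whom (M.σfrom M.top) (𝟙 (M.wedge A₂ A₄)) := by
  have h1 : M.cm M.top M.top A₂ A₄ =
      M.whom (M.δto M.top) (𝟙 (M.wedge A₂ A₄)) ≫ M.σto (M.wedge A₂ A₄) ≫
        M.whom (M.σfrom A₂) (M.σfrom A₄) := by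
    rw [M.psi_σ A₂ A₄]
    simp only [← Category.assoc]
    rw [← M.whom_comp, M.δto_δfrom, Category.comp_id, M.whom_id, Category.id_comp]
    simp only [Category.assoc]
    rw [← M.whom_comp, M.σto_σfrom, M.σto_σfrom, M.whom_id, Category.comp_id]
  have h2 : (M.whom (M.σto A₂) (M.σto A₄) ≫ M.σfrom (M.wedge A₂ A₄) ≫
      M.whom (M.σfrom M.top) (𝟙 (M.wedge A₂ A₄))) ≫ M.cm M.top M.top A₂ A₄ = 𝟙 _ := by
    rw [h1]
    simp only [Category.assoc]
    rw [← Category.assoc (M.whom (M.σfrom M.top) _), ← M.whom_comp,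
      M.δtop_eq_σtop, M.σfrom_σto, Category.comp_id, M.whom_id, Category.id_comp,
      ← Category.assoc (M.σfrom _), M.σfrom_σto, Category.id_comp,
      ← M.whom_comp, M.σto_σfrom, M.σto_σfrom, M.whom_id]
  have h3 := M.cm_cm M.top M.top A₂ A₄
  calc M.cm M.top A₂ M.top A₄
      = 𝟙 _ ≫ M.cm M.top A₂ M.top A₄ := by rw [Category.id_comp]
    _ = ((M.whom (M.σto A₂) (M.σto A₄) ≫ M.σfrom (M.wedge A₂ A₄) ≫
          M.whom (M.σfrom M.top) (𝟙 (M.wedge A₂ A₄))) ≫ M.cm M.top M.top A₂ A₄) ≫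
          M.cm M.top A₂ M.top A₄ := by rw [h2]
    _ = (M.whom (M.σto A₂) (M.σto A₄) ≫ M.σfrom (M.wedge A₂ A₄) ≫
          M.whom (M.σfrom M.top) (𝟙 (M.wedge A₂ A₄))) ≫
          (M.cm M.top M.top A₂ A₄ ≫ M.cm M.top A₂ M.top A₄) := by
            simp only [Category.assoc]
    _ = M.whom (M.σto A₂) (M.σto A₄) ≫ M.σfrom (M.wedge A₂ A₄) ≫
          M.whom (M.σfrom M.top) (𝟙 (M.wedge A₂ A₄)) := by
            rw [h3, Category.comp_id]
end

section
/- Under the listed assumptions, the equation (c^m23) holds: for all objects A₁, A₄ of 𝒜, c^m_{A₁,⊤,⊤,A₄} = 1_{(A₁∧⊤)∧(⊤∧A₄)}. -/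
open CategoryTheory

universe v u

variable {C : Type u} [Category.{v} C]

namespace MedialDataAux

variable (M : MedialData C)

lemma whom_comp' {A B B' X Y Y' : C} (f : A ⟶ B) (g : B ⟶ B') (h : X ⟶ Y) (k : Y ⟶ Y') :
    M.whom f h ≫ M.whom g k = M.whom (f ≫ g) (h ≫ k) := (M.whom_comp f g h k).symm

lemma δto_wedge_top (A : C) :
    M.δto (M.wedge A M.top) = M.whom (M.δto A) (𝟙 M.top) := by
  have h := M.δto_natural (M.δto A)
  calc M.δto (M.wedge A M.top)
      = M.δto (M.wedge A M.top) ≫ (M.δto A ≫ M.δfrom A) := by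
        rw [M.δto_δfrom, Category.comp_id]
    _ = (M.δto (M.wedge A M.top) ≫ M.δto A) ≫ M.δfrom A := by rw [Category.assoc]
    _ = (M.whom (M.δto A) (𝟙 M.top) ≫ M.δto A) ≫ M.δfrom A := by rw [h]
    _ = M.whom (M.δto A) (𝟙 M.top) := by
        rw [Category.assoc, M.δto_δfrom, Category.comp_id]

lemma σto_top_wedge (A : C) :
    M.σto (M.wedge M.top A) = M.whom (𝟙 M.top) (M.σto A) := by
  have h := M.σto_natural (M.σto A)
  calc M.σto (M.wedge M.top A)
      = M.σto (M.wedge M.top A) ≫ (M.σto A ≫ M.σfrom A) := by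
        rw [M.σto_σfrom, Category.comp_id]
    _ = (M.σto (M.wedge M.top A) ≫ M.σto A) ≫ M.σfrom A := by rw [Category.assoc]
    _ = (M.whom (𝟙 M.top) (M.σto A) ≫ M.σto A) ≫ M.σfrom A := by rw [h]
    _ = M.whom (𝟙 M.top) (M.σto A) := by
        rw [Category.assoc, M.σto_σfrom, Category.comp_id]

lemma cm_A_top (A : C) :
    M.cm A M.top M.top M.top = 𝟙 (M.wedge (M.wedge A M.top) (M.wedge M.top M.top)) := by
  have h := M.psi_δ A M.top
  rw [δto_wedge_top] at h
  calc M.cm A M.top M.top M.top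
      = (M.whom (𝟙 (M.wedge A M.top)) (M.δto M.top) ≫
          M.whom (𝟙 (M.wedge A M.top)) (M.δfrom M.top)) ≫
          M.cm A M.top M.top M.top ≫
          (M.whom (M.δto A) (M.δto M.top) ≫ M.whom (M.δfrom A) (M.δfrom M.top)) := by
        simp [whom_comp', M.δto_δfrom, M.whom_id]
    _ = M.whom (𝟙 (M.wedge A M.top)) (M.δto M.top) ≫
          (M.whom (𝟙 (M.wedge A M.top)) (M.δfrom M.top) ≫ M.cm A M.top M.top M.top ≫
            M.whom (M.δto A) (M.δto M.top)) ≫ M.whom (M.δfrom A) (M.δfrom M.top) := by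
        simp only [Category.assoc]
    _ = M.whom (𝟙 (M.wedge A M.top)) (M.δto M.top) ≫
          M.whom (M.δto A) (𝟙 M.top) ≫ M.whom (M.δfrom A) (M.δfrom M.top) := by
        rw [← h]
    _ = 𝟙 _ := by
        simp [whom_comp', M.δto_δfrom, M.whom_id]

lemma cm_top_A (A : C) :
    M.cm M.top M.top M.top A = 𝟙 (M.wedge (M.wedge M.top M.top) (M.wedge M.top A)) := by
  have h := M.psi_σ M.top A
  rw [σto_top_wedge] at h
  calc M.cm M.top M.top M.top A
      = (M.whom (M.δto M.top) (𝟙 (M.wedge M.top A)) ≫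
          M.whom (M.δfrom M.top) (𝟙 (M.wedge M.top A))) ≫
          M.cm M.top M.top M.top A ≫
          (M.whom (M.σto M.top) (M.σto A) ≫ M.whom (M.σfrom M.top) (M.σfrom A)) := by
        simp [whom_comp', M.δto_δfrom, M.σto_σfrom, M.whom_id]
    _ = M.whom (M.δto M.top) (𝟙 (M.wedge M.top A)) ≫
          (M.whom (M.δfrom M.top) (𝟙 (M.wedge M.top A)) ≫ M.cm M.top M.top M.top A ≫
            M.whom (M.σto M.top) (M.σto A)) ≫ M.whom (M.σfrom M.top) (M.σfrom A) := by
        simp only [Category.assoc]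
    _ = M.whom (M.δto M.top) (𝟙 (M.wedge M.top A)) ≫
          M.whom (𝟙 M.top) (M.σto A) ≫ M.whom (M.σfrom M.top) (M.σfrom A) := by
        rw [← h]
    _ = 𝟙 _ := by
        simp [whom_comp', M.δtop_eq_σtop, M.σto_σfrom, M.whom_id]

lemma cm_big (A B : C) :
    M.cm (M.wedge A M.top) (M.wedge M.top M.top) (M.wedge M.top M.top) (M.wedge M.top B) =
      𝟙 _ := by
  have h := M.psi_cm A M.top M.top M.top M.top M.top M.top B
  rw [cm_A_top, cm_top_A, M.whom_id] at h
  simp only [Category.id_comp, Category.comp_id] at h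
  -- h : K ≫ K = K
  have h2 := M.cm_cm (M.wedge A M.top) (M.wedge M.top M.top) (M.wedge M.top M.top)
      (M.wedge M.top B)
  rw [h2] at h
  exact h.symm

end MedialDataAux

/-- The equation (c^m23). -/
theorem cm23 (M : MedialData C) (A₁ A₄ : C) :
    M.cm A₁ M.top M.top A₄ =
      𝟙 (M.wedge (M.wedge A₁ M.top) (M.wedge M.top A₄)) := by
  have hnat := M.cm_natural (M.δto A₁) (M.δto M.top) (M.δto M.top) (M.σto A₄)
  rw [MedialDataAux.cm_big, Category.id_comp] at hnat
  -- hnat : W = W ≫ cm A₁ ⊤ ⊤ A₄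
  have hW : M.whom (M.whom (M.δfrom A₁) (M.δfrom M.top)) (M.whom (M.δfrom M.top) (M.σfrom A₄)) ≫
      M.whom (M.whom (M.δto A₁) (M.δto M.top)) (M.whom (M.δto M.top) (M.σto A₄)) =
      𝟙 (M.wedge (M.wedge A₁ M.top) (M.wedge M.top A₄)) := by
    simp [MedialDataAux.whom_comp', M.δfrom_δto, M.σfrom_σto, M.whom_id]
  calc M.cm A₁ M.top M.top A₄
      = (M.whom (M.whom (M.δfrom A₁) (M.δfrom M.top))
            (M.whom (M.δfrom M.top) (M.σfrom A₄)) ≫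
          M.whom (M.whom (M.δto A₁) (M.δto M.top)) (M.whom (M.δto M.top) (M.σto A₄))) ≫
          M.cm A₁ M.top M.top A₄ := by rw [hW, Category.id_comp]
    _ = M.whom (M.whom (M.δfrom A₁) (M.δfrom M.top)) (M.whom (M.δfrom M.top) (M.σfrom A₄)) ≫
          M.whom (M.whom (M.δto A₁) (M.δto M.top)) (M.whom (M.δto M.top) (M.σto A₄)) := by
        rw [Category.assoc, ← hnat]
    _ = 𝟙 _ := hW
end

section
/- Under the listed assumptions, the defined associativity arrows are mutually inverse isomorphisms: for all objects A, B, C of 𝒜, b←_{A,B,C} ∘ b→_{A,B,C} = 1_{A∧(B∧C)} and b→_{A,B,C} ∘ b←_{A,B,C} = 1_{(A∧B)∧C}. -/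
open CategoryTheory

universe v u

variable {C : Type u} [Category.{v} C]

/-- `b→` and `b←` are mutually inverse isomorphisms. -/
theorem bto_bfrom_inverse (M : MedialData C) (A B X : C) :
    M.bto A B X ≫ M.bfrom A B X = 𝟙 (M.wedge A (M.wedge B X)) ∧
      M.bfrom A B X ≫ M.bto A B X = 𝟙 (M.wedge (M.wedge A B) X) := by
  constructor
  · simp only [MedialData.bto, MedialData.bfrom, Category.assoc]
    slice_lhs 3 4 => rw [← M.whom_comp, M.σto_σfrom, Category.id_comp, M.whom_id]
    simp only [Category.id_comp, Category.comp_id]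
    slice_lhs 2 3 => rw [M.cm_cm]
    simp only [Category.id_comp, Category.comp_id]
    rw [← M.whom_comp, M.δfrom_δto, Category.id_comp, M.whom_id]
  · simp only [MedialData.bto, MedialData.bfrom, Category.assoc]
    slice_lhs 3 4 => rw [← M.whom_comp, M.δto_δfrom, Category.id_comp, M.whom_id]
    simp only [Category.id_comp, Category.comp_id]
    slice_lhs 2 3 => rw [M.cm_cm]
    simp only [Category.id_comp, Category.comp_id]
    rw [← M.whom_comp, M.σfrom_σto, Category.id_comp, M.whom_id]
end

section
/- Under the listed assumptions, the defined commutativity arrow is self-inverse: for all objects A, B of 𝒜, c_{B,A} ∘ c_{A,B} = 1_{A∧B}. -/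
open CategoryTheory

universe v u

variable {C : Type u} [Category.{v} C]

/-- The commutativity arrow `c` is self-inverse. -/
theorem cc_self_inverse (M : MedialData C) (A B : C) :
    M.cc A B ≫ M.cc B A = 𝟙 (M.wedge A B) := by
  simp only [MedialData.cc, Category.assoc]
  rw [← Category.assoc (M.whom (M.σto B) (M.δto A)), ← M.whom_comp,
      M.σto_σfrom, M.δto_δfrom, M.whom_id, Category.id_comp,
      ← Category.assoc (M.cm M.top A B M.top), M.cm_cm, Category.id_comp,
      ← M.whom_comp, M.σfrom_σto, M.δfrom_δto, M.whom_id]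
end
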